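/- Fix δ_L, δ_H ∈ (0,1), w > 0, and σ_L > 1 > σ_H > 0. Then there exists r₀ > 0 such that for all r ∈ (0, r₀), the AI cost share for low-quality production s_L(r) = δ_L^{σ_L} r^{1-σ_L} / (δ_L^{σ_L} r^{1-σ_L} + (1-δ_L)^{σ_L} w^{1-σ_L}) strictly exceeds the AI cost share for high-quality production s_H(r) = δ_H^{σ_H} r^{1-σ_H} / (δ_H^{σ_H} r^{1-σ_H} + (1-δ_H)^{σ_H} w^{1-σ_H}). -/
import Mathlib

private lemma half_lt_frac {a b : ℝ} (ha : 0 < a) (hb : 0 < b) (h : b < a) :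
    (1:ℝ)/2 < a / (a + b) := by
  rw [div_lt_div_iff₀ (by norm_num) (by linarith)]
  linarith

private lemma frac_lt_half {a b : ℝ} (ha : 0 < a) (hb : 0 < b) (h : a < b) :
    a / (a + b) < (1:ℝ)/2 := by
  rw [div_lt_div_iff₀ (by linarith) (by norm_num)]
  linarith

/-- Cost asymmetry: when AI capital is cheap enough, the AI cost share of
low-quality production (σ_L > 1) strictly exceeds that of high-quality
production (σ_H < 1). -/
theorem ai_cost_share_asymmetry
    (δL δH σL σH w : ℝ)
    (hδL : δL ∈ Set.Ioo (0:ℝ) 1) (hδH : δH ∈ Set.Ioo (0:ℝ) 1)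
    (hw : 0 < w) (hσL : 1 < σL) (hσH : 0 < σH) (hσH1 : σH < 1) :
    ∃ r₀ > (0:ℝ), ∀ r ∈ Set.Ioo (0:ℝ) r₀,
      δH ^ σH * r ^ (1 - σH) /
          (δH ^ σH * r ^ (1 - σH) + (1 - δH) ^ σH * w ^ (1 - σH))
        < δL ^ σL * r ^ (1 - σL) /
            (δL ^ σL * r ^ (1 - σL) + (1 - δL) ^ σL * w ^ (1 - σL)) := by
  obtain ⟨hδL0, hδL1⟩ := hδL
  obtain ⟨hδH0, hδH1⟩ := hδH
  have hAL : (0:ℝ) < δL ^ σL := Real.rpow_pos_of_pos hδL0 _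
  have hBL : (0:ℝ) < (1 - δL) ^ σL * w ^ (1 - σL) :=
    mul_pos (Real.rpow_pos_of_pos (by linarith) _) (Real.rpow_pos_of_pos hw _)
  have hAH : (0:ℝ) < δH ^ σH := Real.rpow_pos_of_pos hδH0 _
  have hBH : (0:ℝ) < (1 - δH) ^ σH * w ^ (1 - σH) :=
    mul_pos (Real.rpow_pos_of_pos (by linarith) _) (Real.rpow_pos_of_pos hw _)
  set qL : ℝ := (1 - δL) ^ σL * w ^ (1 - σL) / δL ^ σL with hqL
  set qH : ℝ := (1 - δH) ^ σH * w ^ (1 - σH) / δH ^ σH with hqH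
  have hqL0 : 0 < qL := div_pos hBL hAL
  have hqH0 : 0 < qH := div_pos hBH hAH
  have heL : (1 - σL) ≠ 0 := by linarith
  have heH : (1 - σH) ≠ 0 := by linarith
  set rL : ℝ := qL ^ (1 - σL)⁻¹ with hrL
  set rH : ℝ := qH ^ (1 - σH)⁻¹ with hrH
  have hrL0 : 0 < rL := Real.rpow_pos_of_pos hqL0 _
  have hrH0 : 0 < rH := Real.rpow_pos_of_pos hqH0 _
  refine ⟨min rL rH, lt_min hrL0 hrH0, ?_⟩
  rintro r ⟨hr0, hr1⟩
  have hrLlt : r < rL := lt_of_lt_of_le hr1 (min_le_left _ _)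
  have hrHlt : r < rH := lt_of_lt_of_le hr1 (min_le_right _ _)
  -- low: r^(1-σL) > qL
  have hL : qL < r ^ (1 - σL) := by
    have h1 : rL ^ (1 - σL) < r ^ (1 - σL) :=
      Real.rpow_lt_rpow_of_neg hr0 hrLlt (by linarith)
    rwa [hrL, Real.rpow_inv_rpow hqL0.le heL] at h1
  -- high: r^(1-σH) < qH
  have hH : r ^ (1 - σH) < qH := by
    have h1 : r ^ (1 - σH) < rH ^ (1 - σH) :=
      Real.rpow_lt_rpow hr0.le hrHlt (by linarith)
    rwa [hrH, Real.rpow_inv_rpow hqH0.le heH] at h1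
  have hLkey : (1 - δL) ^ σL * w ^ (1 - σL) < δL ^ σL * r ^ (1 - σL) := by
    rw [hqL, div_lt_iff₀ hAL] at hL
    linarith [hL]
  have hHkey : δH ^ σH * r ^ (1 - σH) < (1 - δH) ^ σH * w ^ (1 - σH) := by
    rw [hqH, lt_div_iff₀ hAH] at hH
    linarith [hH]
  have hrpL : (0:ℝ) < δL ^ σL * r ^ (1 - σL) :=
    mul_pos hAL (Real.rpow_pos_of_pos hr0 _)
  have hrpH : (0:ℝ) < δH ^ σH * r ^ (1 - σH) :=
    mul_pos hAH (Real.rpow_pos_of_pos hr0 _)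
  calc δH ^ σH * r ^ (1 - σH) /
          (δH ^ σH * r ^ (1 - σH) + (1 - δH) ^ σH * w ^ (1 - σH))
      < 1/2 := frac_lt_half hrpH hBH hHkey
    _ < δL ^ σL * r ^ (1 - σL) /
            (δL ^ σL * r ^ (1 - σL) + (1 - δL) ^ σL * w ^ (1 - σL)) :=
        half_lt_frac hrpL hBL hLkey
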